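/- Let X ⊆ ℝ^n be convex, u : ℝ^n → ℝ convex and differentiable, and g_1, …, g_m : ℝ^n → ℝ differentiable with g_j being (μ_j, q_j)-uniformly convex (μ_j ≥ 0, q_j ≥ 1). Let h : ℝ^m → ℝ be convex, componentwise nondecreasing, and differentiable with L_h-Lipschitz gradient for some L_h > 0, and let h* be its Fenchel conjugate. Let x⋆ ∈ X, set g = (g_1, …, g_m) and λ⋆ = ∇h(g(x⋆)), and assume first-order optimality: ⟨∇u(x⋆) + Σ_j λ⋆_j ∇g_j(x⋆), x − x⋆⟩ ≥ 0 for all x ∈ X. Then for all x ∈ X and all λ ∈ dom h*: [⟨λ⋆, g(x)⟩ − h*(λ⋆) + u(x)] − [⟨λ, g(x⋆)⟩ − h*(λ) + u(x⋆)] ≥ Σ_{j=1}^m λ⋆_j (μ_j/(q_j+1)) ‖x − x⋆‖^{q_j+1} + (1/(2L_h)) ‖λ − λ⋆‖². -/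

import Mathlib

open scoped RealInnerProductSpace BigOperators

/-- Fenchel conjugate of a real-valued function on `ℝ^m`, valued in `EReal`. -/
noncomputable def fenchelConjR {m : ℕ} (h : EuclideanSpace ℝ (Fin m) → ℝ)
    (s : EuclideanSpace ℝ (Fin m)) : EReal :=
  ⨆ z : EuclideanSpace ℝ (Fin m), ((⟪s, z⟫ - h z : ℝ) : EReal)

/-!
Split the gap as `L(x; λ⋆) − L(x⋆; λ⋆)` plus `L(x⋆; λ⋆) − L(x⋆; λ)`. The first part is bounded
below by the gradient inequality for `u`, the uniform convexity of the `g_j` weighted by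
`λ⋆ ≥ 0` (nonnegative because `h` is nondecreasing) and first-order optimality of `x⋆`.
For the second, `λ⋆ = ∇h(g(x⋆))` gives the Fenchel–Young equality
`h*(λ⋆) = ⟨λ⋆, g(x⋆)⟩ − h(g(x⋆))`, while testing the supremum defining `h*(λ)` at
`g(x⋆) + (λ − λ⋆)/L_h` and bounding `h` there by the descent lemma gives
`h*(λ) ≥ ⟨λ, g(x⋆)⟩ − h(g(x⋆)) + ‖λ − λ⋆‖²/(2 L_h)`, i.e. `h*` is `1/L_h`-strongly convex.
-/

section Gradient

variable {E : Type*} [NormedAddCommGroup E] [InnerProductSpace ℝ E] [CompleteSpace E]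
  {f : E → ℝ} {f' : E → E}

theorem HasGradientAt.hasDerivAt_comp_add_smul {x d g : E} {t : ℝ}
    (hf : HasGradientAt f g (x + t • d)) :
    HasDerivAt (fun s : ℝ => f (x + s • d)) ⟪g, d⟫ t := by
  have hline : HasDerivAt (fun s : ℝ => x + s • d) d t := by
    simpa using ((hasDerivAt_id t).smul_const d).const_add x
  simpa [InnerProductSpace.toDual_apply_apply, Function.comp_def] using
    hf.hasFDerivAt.comp_hasDerivAt t hline

theorem ConvexOn.inner_gradient_le_sub {x y g : E} (hc : ConvexOn ℝ Set.univ f)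
    (hf : HasGradientAt f g x) : ⟪g, y - x⟫ ≤ f y - f x := by
  have hline : ConvexOn ℝ Set.univ (fun t : ℝ => f (x + t • (y - x))) := by
    refine (hc.comp_affineMap (AffineMap.lineMap x y)).congr fun t _ => ?_
    simp [AffineMap.lineMap_apply_module', add_comm]
  have hderiv := (show HasGradientAt f g (x + (0 : ℝ) • (y - x)) by simpa using hf)
    |>.hasDerivAt_comp_add_smul
  simpa [slope_def_field] using
    hline.le_slope_of_hasDerivAt (Set.mem_univ 0) (Set.mem_univ 1) zero_lt_one hderiv

theorem le_add_inner_gradient_add_sq_of_lipschitz (hf : ∀ z, HasGradientAt f (f' z) z)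
    {L : ℝ} (hLip : ∀ z w, ‖f' z - f' w‖ ≤ L * ‖z - w‖) (w z : E) :
    f z ≤ f w + ⟪f' w, z - w⟫ + L / 2 * ‖z - w‖ ^ 2 := by
  set d := z - w
  have hderiv : ∀ t : ℝ, HasDerivAt (fun s : ℝ => f (w + s • d)) ⟪f' (w + t • d), d⟫ t :=
    fun t => (hf _).hasDerivAt_comp_add_smul
  have hbound : ∀ t ∈ Set.Ico (0 : ℝ) 1,
      ⟪f' (w + t • d), d⟫ ≤ ⟪f' w, d⟫ + L * ‖d‖ ^ 2 * t := by
    intro t ht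
    have hnorm : ‖f' (w + t • d) - f' w‖ ≤ L * (t * ‖d‖) := by
      simpa [norm_smul, abs_of_nonneg ht.1] using hLip (w + t • d) w
    calc ⟪f' (w + t • d), d⟫ = ⟪f' w, d⟫ + ⟪f' (w + t • d) - f' w, d⟫ := by
          rw [inner_sub_left]; ring
      _ ≤ ⟪f' w, d⟫ + ‖f' (w + t • d) - f' w‖ * ‖d‖ := by gcongr; exact real_inner_le_norm _ _
      _ ≤ ⟪f' w, d⟫ + L * (t * ‖d‖) * ‖d‖ := by gcongr
      _ = ⟪f' w, d⟫ + L * ‖d‖ ^ 2 * t := by ring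
  have hquad : ∀ t : ℝ, HasDerivAt (fun s : ℝ => f w + s * ⟪f' w, d⟫ + L / 2 * ‖d‖ ^ 2 * s ^ 2)
      (⟪f' w, d⟫ + L * ‖d‖ ^ 2 * t) t := by
    intro t
    refine ((((hasDerivAt_id t).mul_const ⟪f' w, d⟫).const_add (f w)).add
      ((hasDerivAt_pow 2 t).const_mul (L / 2 * ‖d‖ ^ 2))).congr_deriv ?_
    simp only [Nat.cast_ofNat]
    ring
  have := image_le_of_deriv_right_le_deriv_boundary
    (fun t _ => (hderiv t).continuousAt.continuousWithinAt)
    (fun t _ => (hderiv t).hasDerivWithinAt) (by simp)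
    (fun t _ => (hquad t).continuousAt.continuousWithinAt)
    (fun t _ => (hquad t).hasDerivWithinAt) hbound (Set.right_mem_Icc.2 zero_le_one)
  simpa [d] using this

theorem sum_mul_le_lagrangian_sub_of_first_order {ι : Type*} [Fintype ι] {u : E → ℝ} {u' : E}
    {g : ι → E → ℝ} {g' : ι → E} {r lam : ι → ℝ} {x xstar : E}
    (hu : ConvexOn ℝ Set.univ u) (hu' : HasGradientAt u u' xstar)
    (hg : ∀ j, g j xstar + ⟪g' j, x - xstar⟫ + r j ≤ g j x) (hlam : ∀ j, 0 ≤ lam j)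
    (hopt : 0 ≤ ⟪u' + ∑ j, lam j • g' j, x - xstar⟫) :
    ∑ j, lam j * r j ≤ ∑ j, lam j * (g j x - g j xstar) + (u x - u xstar) := by
  have hu_lin := hu.inner_gradient_le_sub (y := x) hu'
  rw [inner_add_left, sum_inner] at hopt
  simp only [real_inner_smul_left] at hopt
  have hg_lin : ∀ j, lam j * r j ≤ lam j * (g j x - g j xstar) - lam j * ⟪g' j, x - xstar⟫ := by
    intro j
    rw [← mul_sub]
    exact mul_le_mul_of_nonneg_left (by linarith [hg j]) (hlam j)
  have := Finset.sum_le_sum fun j (_ : j ∈ Finset.univ) => hg_lin j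
  rw [Finset.sum_sub_distrib] at this
  linarith

end Gradient

theorem gradient_nonneg_of_monotone {ι : Type*} [Fintype ι]
    {h : EuclideanSpace ℝ ι → ℝ} {g z : EuclideanSpace ℝ ι}
    (hmono : ∀ z w : EuclideanSpace ℝ ι, (∀ j, z j ≤ w j) → h z ≤ h w)
    (hg : HasGradientAt h g z) (j : ι) : 0 ≤ g j := by
  classical
  set e : EuclideanSpace ℝ ι := EuclideanSpace.single j 1
  have hderiv := (show HasGradientAt h g (z + (0 : ℝ) • e) by simpa using hg)
    |>.hasDerivAt_comp_add_smul
  have hmono_line : Monotone (fun t : ℝ => h (z + t • e)) := by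
    intro s t hst
    apply hmono
    intro i
    by_cases hi : i = j <;> simp [e, hi, hst]
  simpa [e, EuclideanSpace.inner_single_right] using hderiv.nonneg_of_monotone hmono_line

section FenchelConjugate

variable {m : ℕ} {h : EuclideanSpace ℝ (Fin m) → ℝ}

theorem le_fenchelConjR (h : EuclideanSpace ℝ (Fin m) → ℝ) (s z : EuclideanSpace ℝ (Fin m)) :
    ((⟪s, z⟫ - h z : ℝ) : EReal) ≤ fenchelConjR h s :=
  le_iSup (fun z => ((⟪s, z⟫ - h z : ℝ) : EReal)) z

theorem fenchelConjR_ne_bot (h : EuclideanSpace ℝ (Fin m) → ℝ) (s : EuclideanSpace ℝ (Fin m)) :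
    fenchelConjR h s ≠ ⊥ :=
  ((EReal.bot_lt_coe _).trans_le (le_fenchelConjR h s 0)).ne'

theorem fenchelConjR_eq_of_hasGradientAt (hc : ConvexOn ℝ Set.univ h)
    {s z : EuclideanSpace ℝ (Fin m)} (hg : HasGradientAt h s z) :
    fenchelConjR h s = ((⟪s, z⟫ - h z : ℝ) : EReal) := by
  refine le_antisymm (iSup_le fun w => EReal.coe_le_coe_iff.2 ?_) (le_fenchelConjR h s z)
  have := hc.inner_gradient_le_sub (y := w) hg
  rw [inner_sub_right] at this
  linarith

theorem le_fenchelConjR_of_lipschitz_gradient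
    {h' : EuclideanSpace ℝ (Fin m) → EuclideanSpace ℝ (Fin m)}
    (hh' : ∀ z, HasGradientAt h (h' z) z) {L : ℝ} (hL : 0 < L)
    (hLip : ∀ z w, ‖h' z - h' w‖ ≤ L * ‖z - w‖) (z s : EuclideanSpace ℝ (Fin m)) :
    ((⟪s, z⟫ - h z + 1 / (2 * L) * ‖s - h' z‖ ^ 2 : ℝ) : EReal) ≤ fenchelConjR h s := by
  set v := s - h' z
  refine le_trans (EReal.coe_le_coe_iff.2 ?_) (le_fenchelConjR h s (z + L⁻¹ • v))
  have hdescent := le_add_inner_gradient_add_sq_of_lipschitz hh' hLip z (z + L⁻¹ • v)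
  have hv : L⁻¹ * ⟪s, v⟫ - L⁻¹ * ⟪h' z, v⟫ = L⁻¹ * ‖v‖ ^ 2 := by
    rw [← mul_sub, ← inner_sub_left, real_inner_self_eq_norm_sq]
  simp only [add_sub_cancel_left, inner_add_right, real_inner_smul_right, norm_smul,
    Real.norm_eq_abs, abs_of_pos (inv_pos.2 hL), mul_pow] at hdescent ⊢
  have hL' : L / 2 * (L⁻¹ ^ 2 * ‖v‖ ^ 2) = L⁻¹ * ‖v‖ ^ 2 - 1 / (2 * L) * ‖v‖ ^ 2 := by
    field_simp; ring
  linarith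

end FenchelConjugate

theorem stmt14_general {n m : ℕ}
    (X : Set (EuclideanSpace ℝ (Fin n)))
    (u : EuclideanSpace ℝ (Fin n) → ℝ)
    (u' : EuclideanSpace ℝ (Fin n) → EuclideanSpace ℝ (Fin n))
    (huconv : ConvexOn ℝ Set.univ u) (hu' : ∀ x, HasGradientAt u (u' x) x)
    (g : Fin m → EuclideanSpace ℝ (Fin n) → ℝ)
    (g' : Fin m → EuclideanSpace ℝ (Fin n) → EuclideanSpace ℝ (Fin n))
    (μ q : Fin m → ℝ)
    (huc : ∀ j x y, g j x + ⟪g' j x, y - x⟫ + μ j / (q j + 1) * ‖y - x‖ ^ (q j + 1) ≤ g j y)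
    (h : EuclideanSpace ℝ (Fin m) → ℝ)
    (h' : EuclideanSpace ℝ (Fin m) → EuclideanSpace ℝ (Fin m))
    (hhconv : ConvexOn ℝ Set.univ h)
    (hhmono : ∀ z w : EuclideanSpace ℝ (Fin m), (∀ j, z j ≤ w j) → h z ≤ h w)
    (hh' : ∀ z, HasGradientAt h (h' z) z)
    (Lh : ℝ) (hLh : 0 < Lh) (hhLip : ∀ z w, ‖h' z - h' w‖ ≤ Lh * ‖z - w‖)
    (xstar : EuclideanSpace ℝ (Fin n))
    (gvec : EuclideanSpace ℝ (Fin n) → EuclideanSpace ℝ (Fin m))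
    (hgvec : ∀ x j, gvec x j = g j x)
    (lamstar : EuclideanSpace ℝ (Fin m)) (hlamstar : lamstar = h' (gvec xstar))
    (hopt : ∀ x ∈ X, 0 ≤ ⟪u' xstar + ∑ j, lamstar j • g' j xstar, x - xstar⟫) :
    ∀ x ∈ X, ∀ lam : EuclideanSpace ℝ (Fin m), fenchelConjR h lam < ⊤ →
      ((∑ j, lamstar j * (μ j / (q j + 1)) * ‖x - xstar‖ ^ (q j + 1)
          + 1 / (2 * Lh) * ‖lam - lamstar‖ ^ 2 : ℝ) : EReal)
        ≤ (((⟪lamstar, gvec x⟫ : ℝ) : EReal) - fenchelConjR h lamstar + (u x : EReal))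
          - (((⟪lam, gvec xstar⟫ : ℝ) : EReal) - fenchelConjR h lam + (u xstar : EReal)) := by
  intro x hx lam hlam
  have hgrad : HasGradientAt h lamstar (gvec xstar) := hlamstar ▸ hh' _
  have hinner : ∀ y, ⟪lamstar, gvec y⟫ = ∑ j, lamstar j * g j y := fun y => by
    simp [PiLp.inner_apply, hgvec, mul_comm]
  have hprimal := sum_mul_le_lagrangian_sub_of_first_order huconv (hu' xstar)
    (fun j => huc j xstar x) (gradient_nonneg_of_monotone hhmono hgrad) (hopt x hx)
  have hdual := le_fenchelConjR_of_lipschitz_gradient hh' hLh hhLip (gvec xstar) lam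
  rw [← hlamstar, ← EReal.coe_toReal hlam.ne (fenchelConjR_ne_bot h lam),
    EReal.coe_le_coe_iff] at hdual
  rw [fenchelConjR_eq_of_hasGradientAt hhconv hgrad,
    ← EReal.coe_toReal hlam.ne (fenchelConjR_ne_bot h lam)]
  norm_cast
  simp only [hinner, mul_assoc, Finset.sum_sub_distrib, mul_sub] at hprimal ⊢
  linarith

/-- Growth of the gap function: for `(μ_j, q_j)`-uniformly convex components `g_j`, smooth
componentwise-nondecreasing `h` with `L_h`-Lipschitz gradient, `λ⋆ = ∇h(g(x⋆))`, and `x⋆`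
first-order optimal, the gap
`[⟨λ⋆, g(x)⟩ − h*(λ⋆) + u(x)] − [⟨λ, g(x⋆)⟩ − h*(λ) + u(x⋆)]` is at least
`Σ_j λ⋆_j (μ_j/(q_j+1)) ‖x − x⋆‖^{q_j+1} + (1/(2L_h)) ‖λ − λ⋆‖²`. -/
theorem stmt14 {n m : ℕ}
    (X : Set (EuclideanSpace ℝ (Fin n))) (hX : Convex ℝ X)
    (u : EuclideanSpace ℝ (Fin n) → ℝ)
    (u' : EuclideanSpace ℝ (Fin n) → EuclideanSpace ℝ (Fin n))
    (huconv : ConvexOn ℝ Set.univ u) (hu' : ∀ x, HasGradientAt u (u' x) x)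
    (g : Fin m → EuclideanSpace ℝ (Fin n) → ℝ)
    (g' : Fin m → EuclideanSpace ℝ (Fin n) → EuclideanSpace ℝ (Fin n))
    (hg' : ∀ j x, HasGradientAt (g j) (g' j x) x)
    (μ q : Fin m → ℝ) (hμ : ∀ j, 0 ≤ μ j) (hq : ∀ j, 1 ≤ q j)
    (huc : ∀ j x y, g j x + ⟪g' j x, y - x⟫ + μ j / (q j + 1) * ‖y - x‖ ^ (q j + 1) ≤ g j y)
    (h : EuclideanSpace ℝ (Fin m) → ℝ)
    (h' : EuclideanSpace ℝ (Fin m) → EuclideanSpace ℝ (Fin m))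
    (hhconv : ConvexOn ℝ Set.univ h)
    (hhmono : ∀ z w : EuclideanSpace ℝ (Fin m), (∀ j, z j ≤ w j) → h z ≤ h w)
    (hh' : ∀ z, HasGradientAt h (h' z) z)
    (Lh : ℝ) (hLh : 0 < Lh) (hhLip : ∀ z w, ‖h' z - h' w‖ ≤ Lh * ‖z - w‖)
    (xstar : EuclideanSpace ℝ (Fin n)) (hxstar : xstar ∈ X)
    (gvec : EuclideanSpace ℝ (Fin n) → EuclideanSpace ℝ (Fin m))
    (hgvec : ∀ x j, gvec x j = g j x)
    (lamstar : EuclideanSpace ℝ (Fin m)) (hlamstar : lamstar = h' (gvec xstar))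
    (hopt : ∀ x ∈ X, 0 ≤ ⟪u' xstar + ∑ j, lamstar j • g' j xstar, x - xstar⟫) :
    ∀ x ∈ X, ∀ lam : EuclideanSpace ℝ (Fin m), fenchelConjR h lam < ⊤ →
      ((∑ j, lamstar j * (μ j / (q j + 1)) * ‖x - xstar‖ ^ (q j + 1)
          + 1 / (2 * Lh) * ‖lam - lamstar‖ ^ 2 : ℝ) : EReal)
        ≤ (((⟪lamstar, gvec x⟫ : ℝ) : EReal) - fenchelConjR h lamstar + (u x : EReal))
          - (((⟪lam, gvec xstar⟫ : ℝ) : EReal) - fenchelConjR h lam + (u xstar : EReal)) :=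
  stmt14_general X u u' huconv hu' g g' μ q huc h h' hhconv hhmono hh' Lh hLh hhLip xstar gvec hgvec
    lamstar hlamstar hopt
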